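/- arXiv:2405.10582 — 2 statements merged into one kernel-verified Lean document; each statement's English description precedes it below -/
import Mathlib

section
/- Adaptation of a lemma of Shen–Tokdar–Ghosal (Lemma C.2). For any probability measures P and Q on a measurable space, with densities p and q with respect to a common dominating measure, and any λ ∈ (0, 1/2], one has ∫ (log(p/q))² · 1{ |log(p/q)| ≤ log(1/λ) } dP ≤ 8 ( 1 + (log(1/λ))² ) ∫ ( √(q/p) − 1 )² · 1{ |log(p/q)| ≤ log(1/λ) } dP. -/
open MeasureTheory Real

lemma stg_key (t L : ℝ) (hL : 0 ≤ L) (ht : |t| ≤ L) :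
    t ^ 2 ≤ 8 * (1 + L ^ 2) * (Real.exp (-t / 2) - 1) ^ 2 := by
  obtain ⟨ht1, ht2⟩ := abs_le.mp ht
  rcases le_or_gt t 0 with h | h
  · have h1 : (-t/2) + 1 ≤ Real.exp (-t/2) := Real.add_one_le_exp _
    nlinarith [sq_nonneg (Real.exp (-t/2) - 1 + t/2), sq_nonneg L, sq_nonneg t,
      sq_nonneg (L*(Real.exp (-t/2) - 1))]
  · have h1 : (t/2) + 1 ≤ Real.exp (t/2) := Real.add_one_le_exp _
    have hme : Real.exp (-t/2) * Real.exp (t/2) = 1 := by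
      rw [← Real.exp_add]; ring_nf; exact Real.exp_zero
    have hE : 0 < Real.exp (-t/2) := Real.exp_pos _
    have h2 : Real.exp (-t/2) * (t/2 + 1) ≤ 1 := by
      calc Real.exp (-t/2) * (t/2 + 1) ≤ Real.exp (-t/2) * Real.exp (t/2) :=
            mul_le_mul_of_nonneg_left h1 hE.le
        _ = 1 := hme
    have h3 : t/2 ≤ (1 - Real.exp (-t/2)) * (1 + t/2) := by nlinarith
    have h4 : 0 ≤ 1 - Real.exp (-t/2) := by nlinarith
    have h5 : (1 + t/2)^2 ≤ 2 * (1 + L^2) := by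
      nlinarith [sq_nonneg (7*L - 2), sq_nonneg (L - t)]
    nlinarith [sq_nonneg ((1 - Real.exp (-t/2)) * (1 + t/2) - t/2),
      mul_nonneg h4 (by linarith : (0:ℝ) ≤ 1 + t/2), sq_nonneg (1 - Real.exp (-t/2))]

/-- **Adaptation of a lemma of Shen–Tokdar–Ghosal (Lemma C.2).** For probability measures with
densities `p` and `q` with respect to a common dominating measure `μ`, and `λ ∈ (0,1/2]`,
the truncated second moment of the log-ratio is controlled by the corresponding truncated
Hellinger-type quantity. -/
theorem shen_tokdar_ghosal_adaptation {α : Type*} [MeasurableSpace α]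
    (μ : Measure α) [SigmaFinite μ] (p q : α → ℝ)
    (hpm : Measurable p) (hqm : Measurable q)
    (hp0 : ∀ x, 0 ≤ p x) (hq0 : ∀ x, 0 ≤ q x)
    (hp1 : ∫ x, p x ∂μ = 1) (hq1 : ∫ x, q x ∂μ = 1)
    (lam : ℝ) (hlam : lam ∈ Set.Ioc (0 : ℝ) (1 / 2)) :
    ∫ x, Set.indicator {y | |Real.log (p y / q y)| ≤ Real.log (1 / lam)}
        (fun y => Real.log (p y / q y) ^ 2) x * p x ∂μ
      ≤ 8 * (1 + Real.log (1 / lam) ^ 2) *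
        ∫ x, Set.indicator {y | |Real.log (p y / q y)| ≤ Real.log (1 / lam)}
          (fun y => (Real.sqrt (q y / p y) - 1) ^ 2) x * p x ∂μ := by
  obtain ⟨hl0, hl2⟩ := hlam
  set L := Real.log (1 / lam) with hLdef
  have h1lam : 1 ≤ 1 / lam := by rw [le_div_iff₀ hl0]; linarith
  have hL0 : 0 ≤ L := Real.log_nonneg h1lam
  set S : Set α := {y | |Real.log (p y / q y)| ≤ L} with hSdef
  set g : α → ℝ := fun x => S.indicator (fun y => (Real.sqrt (q y / p y) - 1) ^ 2) x * p x
    with hgdef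
  set f : α → ℝ := fun x => S.indicator (fun y => Real.log (p y / q y) ^ 2) x * p x with hfdef
  have hC0 : (0:ℝ) ≤ 8 * (1 + L ^ 2) := by positivity
  -- pointwise inequality
  have hpt : ∀ x, f x ≤ 8 * (1 + L ^ 2) * g x := by
    intro x
    by_cases hxS : x ∈ S
    · simp only [hfdef, hgdef, Set.indicator_of_mem hxS]
      rcases eq_or_lt_of_le (hp0 x) with hp | hp
      · rw [← hp]
        simp
      rcases eq_or_lt_of_le (hq0 x) with hq | hq
      · rw [← hq]; simp
        positivity
      · -- p x > 0, q x > 0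
        have ht : |Real.log (p x / q x)| ≤ L := hxS
        set t := Real.log (p x / q x) with htdef
        have hqp : q x / p x = Real.exp (-t) := by
          rw [htdef, ← Real.log_inv, Real.exp_log (by positivity)]
          rw [inv_div]
        have hexp : Real.exp (-t) = Real.exp (-t / 2) ^ 2 := by
          rw [sq, ← Real.exp_add]; ring_nf
        have hsq : Real.sqrt (q x / p x) = Real.exp (-t / 2) := by
          rw [hqp, hexp, Real.sqrt_sq (Real.exp_pos _).le]
        rw [hsq, ← mul_assoc]
        exact mul_le_mul_of_nonneg_right (stg_key t L hL0 ht) hp.le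
    · simp [hfdef, hgdef, Set.indicator_of_notMem hxS]
  -- measurability
  have hSmeas : MeasurableSet S :=
    measurableSet_le ((hpm.div hqm).log.abs) measurable_const
  have hPint : Integrable p μ := by
    by_contra h
    rw [integral_undef h] at hp1
    norm_num at hp1
  have hQint : Integrable q μ := by
    by_contra h
    rw [integral_undef h] at hq1
    norm_num at hq1
  have hgmeas : Measurable g := by
    apply Measurable.mul _ hpm
    exact Measurable.indicator (((hqm.div hpm).sqrt.sub measurable_const).pow_const 2) hSmeas
  have hgbound : ∀ x, g x ≤ p x + q x := by
    intro x
    by_cases hxS : x ∈ S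
    · simp only [hgdef, Set.indicator_of_mem hxS]
      rcases eq_or_lt_of_le (hp0 x) with hp | hp
      · rw [← hp]; simp; linarith [hq0 x]
      · have hu0 : 0 ≤ q x / p x := div_nonneg (hq0 x) hp.le
        have hs1 : Real.sqrt (q x / p x) ^ 2 = q x / p x := Real.sq_sqrt hu0
        have hs2 : 0 ≤ Real.sqrt (q x / p x) := Real.sqrt_nonneg _
        have h1 : (Real.sqrt (q x / p x) - 1) ^ 2 ≤ q x / p x + 1 := by nlinarith
        calc (Real.sqrt (q x / p x) - 1) ^ 2 * p x ≤ (q x / p x + 1) * p x :=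
              mul_le_mul_of_nonneg_right h1 hp.le
          _ = q x + p x := by field_simp
          _ = p x + q x := by ring
    · simp only [hgdef, Set.indicator_of_notMem hxS, zero_mul]
      exact add_nonneg (hp0 x) (hq0 x)
  have hg0 : ∀ x, 0 ≤ g x := by
    intro x
    apply mul_nonneg _ (hp0 x)
    exact Set.indicator_nonneg (fun y _ => sq_nonneg _) x
  have hgint : Integrable g μ := by
    apply Integrable.mono' (hPint.add hQint) hgmeas.aestronglyMeasurable
    exact Filter.Eventually.of_forall fun x => by
      rw [Real.norm_eq_abs, abs_of_nonneg (hg0 x)]; exact hgbound x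
  have hf0 : ∀ x, 0 ≤ f x := by
    intro x
    apply mul_nonneg _ (hp0 x)
    exact Set.indicator_nonneg (fun y _ => sq_nonneg _) x
  calc ∫ x, f x ∂μ ≤ ∫ x, 8 * (1 + L ^ 2) * g x ∂μ :=
        integral_mono_of_nonneg (Filter.Eventually.of_forall hf0)
          (hgint.const_mul _) (Filter.Eventually.of_forall hpt)
    _ = 8 * (1 + L ^ 2) * ∫ x, g x ∂μ := integral_const_mul _ _
end

section
/- Bounds on the auxiliary fixed point σ'. Let n ≥ 2 be an integer, A ≥ 2, let D ≥ 1 be an integer, and set v = A √(2n). Let σ' > 0 be the solution of the equation σ = √( (D+1) log( max(v/σ, e) ) ) + (A/σ)(D+1) log( max(v/σ, e) ). Then √( A (D+1) ) ≤ σ' ≤ 2 √( A (D+1) ) log( max(n A, e) ). -/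
open Real

lemma sqrt_le_self' {x : ℝ} (hx : 1 ≤ x) : Real.sqrt x ≤ x := by
  have h0 : (0:ℝ) ≤ x := by linarith
  have t := Real.sq_sqrt h0
  nlinarith [Real.sqrt_nonneg x, sq_nonneg (Real.sqrt x - 1)]


/-- **Bounds on the auxiliary fixed point `σ'`.** If `n ≥ 2`, `A ≥ 2`, `D ≥ 1`,
`v = A √(2n)` and `σ' > 0` solves
`σ = √((D+1) log(max(v/σ, e))) + (A/σ)(D+1) log(max(v/σ, e))`, then
`√(A(D+1)) ≤ σ' ≤ 2 √(A(D+1)) log(max(nA, e))`. -/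
theorem bounds_on_auxiliary_fixed_point (n : ℕ) (hn : 2 ≤ n) (A : ℝ) (hA : 2 ≤ A)
    (D : ℕ) (hD : 1 ≤ D) (v : ℝ) (hv : v = A * Real.sqrt (2 * n))
    (σ' : ℝ) (hσpos : 0 < σ')
    (heq : σ' = Real.sqrt (((D : ℝ) + 1) * Real.log (max (v / σ') (Real.exp 1)))
      + A / σ' * (((D : ℝ) + 1) * Real.log (max (v / σ') (Real.exp 1)))) :
    Real.sqrt (A * ((D : ℝ) + 1)) ≤ σ' ∧
    σ' ≤ 2 * Real.sqrt (A * ((D : ℝ) + 1)) * Real.log (max ((n : ℝ) * A) (Real.exp 1)) := by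
  set L := Real.log (max (v / σ') (Real.exp 1)) with hLdef
  set M := Real.log (max ((n : ℝ) * A) (Real.exp 1)) with hMdef
  have hmaxpos : (0:ℝ) < max (v / σ') (Real.exp 1) :=
    lt_of_lt_of_le (Real.exp_pos 1) (le_max_right _ _)
  have hL1 : 1 ≤ L := by
    have := Real.log_le_log (Real.exp_pos 1) (le_max_right (v / σ') (Real.exp 1))
    rwa [Real.log_exp] at this
  have hD1 : (1:ℝ) ≤ (D:ℝ) := by exact_mod_cast hD
  have hn2 : (2:ℝ) ≤ (n:ℝ) := by exact_mod_cast hn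
  have hApos : (0:ℝ) < A := by linarith
  have hADpos : (0:ℝ) < A * ((D:ℝ)+1) := by positivity
  set s := Real.sqrt (A * ((D:ℝ)+1)) with hsdef
  have hspos : 0 < s := Real.sqrt_pos.mpr hADpos
  have hs2 : s * s = A * ((D:ℝ)+1) := Real.mul_self_sqrt hADpos.le
  have hsq : σ' * σ' = σ' * Real.sqrt (((D:ℝ)+1) * L) + A * (((D:ℝ)+1) * L) := by
    nth_rewrite 2 [heq]
    field_simp
  have hAL : A * ((D:ℝ)+1) ≤ σ' * σ' := by
    nlinarith [mul_nonneg hσpos.le (Real.sqrt_nonneg (((D:ℝ)+1) * L)),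
      mul_le_mul_of_nonneg_left hL1 hADpos.le]
  have hlow : s ≤ σ' := by
    have h := Real.sqrt_le_sqrt hAL
    rwa [Real.sqrt_mul_self hσpos.le] at h
  refine ⟨hlow, ?_⟩
  have hs2' : 2 ≤ s := by nlinarith
  have hσ2 : (2:ℝ) ≤ σ' := le_trans hs2' hlow
  -- v / σ' ≤ n * A
  have hsqrt2n : Real.sqrt (2*(n:ℝ)) ≤ 2*(n:ℝ) := sqrt_le_self' (by linarith)
  have hv0 : 0 ≤ v := by rw [hv]; positivity
  have hvσ : v / σ' ≤ (n:ℝ) * A := by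
    have h1 : v / σ' ≤ v / 2 :=
      div_le_div_of_nonneg_left hv0 (by norm_num) hσ2
    have h2 : v ≤ 2 * ((n:ℝ) * A) := by
      rw [hv]; nlinarith
    linarith
  have hLM : L ≤ M := Real.log_le_log hmaxpos (max_le_max hvσ le_rfl)
  have hL0 : (0:ℝ) ≤ L := by linarith
  -- term 1
  have hsqrtL : Real.sqrt L ≤ L := sqrt_le_self' hL1
  have ht1 : Real.sqrt (((D:ℝ)+1) * L) ≤ s * L := by
    have h1 : Real.sqrt (((D:ℝ)+1) * L) ≤ Real.sqrt (A * ((D:ℝ)+1) * L) := by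
      apply Real.sqrt_le_sqrt
      nlinarith [mul_nonneg (show (0:ℝ) ≤ A - 1 by linarith) (mul_nonneg (show (0:ℝ) ≤ (D:ℝ)+1 by linarith) hL0)]
    have h2 : Real.sqrt (A * ((D:ℝ)+1) * L) = s * Real.sqrt L :=
      Real.sqrt_mul hADpos.le L
    have h3 : s * Real.sqrt L ≤ s * L :=
      mul_le_mul_of_nonneg_left hsqrtL hspos.le
    linarith
  -- term 2
  have ht2 : A / σ' * (((D:ℝ)+1) * L) ≤ s * L := by
    have h1 : A / σ' * (((D:ℝ)+1) * L) = (A * ((D:ℝ)+1) * L) / σ' := by ring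
    have h2 : (A * ((D:ℝ)+1) * L) / σ' ≤ (A * ((D:ℝ)+1) * L) / s :=
      div_le_div_of_nonneg_left (by positivity) hspos hlow
    have h3 : (A * ((D:ℝ)+1) * L) / s = s * L := by
      rw [← hs2]; field_simp
    linarith
  have hsM : s * L ≤ s * M := mul_le_mul_of_nonneg_left hLM hspos.le
  calc σ' = Real.sqrt (((D:ℝ)+1) * L) + A / σ' * (((D:ℝ)+1) * L) := heq
    _ ≤ s * L + s * L := add_le_add ht1 ht2
    _ = 2 * s * L := by ring
    _ ≤ 2 * s * M := by
      have := mul_le_mul_of_nonneg_left hLM (by positivity : (0:ℝ) ≤ 2 * s)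
      linarith
end
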